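/- Let e be an idempotent of a ring R. If R is SSP, then the corner ring eRe is also SSP: for any two idempotents f, g of eRe, fS + gS is a direct summand of S as a right S-module, where S = eRe. -/

import Mathlib

def IsSummand {R M : Type*} [Ring R] [AddCommGroup M] [Module R M]
    (p : Submodule R M) : Prop :=
  ∃ q : Submodule R M, IsCompl p q

/-- The corner `eRe` of a ring `R`, as a non-unital subring. -/
def corner {R : Type*} [Ring R] (e : R) : NonUnitalSubring R where
  carrier := {x : R | ∃ r : R, x = e * r * e}
  add_mem' := by rintro a b ⟨r, rfl⟩ ⟨s, rfl⟩; exact ⟨r + s, by noncomm_ring⟩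
  zero_mem' := ⟨0, by simp⟩
  neg_mem' := by rintro a ⟨r, rfl⟩; exact ⟨-r, by noncomm_ring⟩
  mul_mem' := by rintro a b ⟨r, rfl⟩ ⟨s, rfl⟩; exact ⟨r * e * e * s, by noncomm_ring⟩

/-- If `e` is an idempotent, the corner `eRe` is a ring with identity `e`. -/
def cornerRing {R : Type*} [Ring R] {e : R} (he : IsIdempotentElem e) :
    Ring (corner e) :=
  { (inferInstance : NonUnitalRing (corner e)) with
    one := ⟨e, 1, by rw [mul_one, he.eq]⟩
    one_mul := by
      rintro ⟨x, r, rfl⟩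
      ext
      show e * (e * r * e) = e * r * e
      simp only [← mul_assoc]
      rw [he.eq]
    mul_one := by
      rintro ⟨x, r, rfl⟩
      ext
      show e * r * e * e = e * r * e
      rw [mul_assoc, he.eq] }

/-! If `R = pR ⊕ Q` for a right `S`-submodule `p` of `S = eRe`, then `S = p ⊕ (Q ∩ S)`:
every `a = Σ pᵢ rᵢ ∈ pR` has `a e = Σ pᵢ (e rᵢ e) ∈ p`, so `x ∈ S` splits as `x = x e = a e + q e`
from `x = a + q`. For `p = fS + gS` the right ideal `pR` is `fR + gR`, a sum of two summands. -/

open Submodule MulOpposite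

section

variable {R : Type*} [Ring R]

theorem Submodule.mem_span_singleton_op {a x : R} : x ∈ span Rᵐᵒᵖ {a} ↔ ∃ r, a * r = x :=
  mem_span_singleton.trans op_surjective.exists

theorem IsIdempotentElem.isSummand_span_op {a : R} (ha : IsIdempotentElem a) :
    IsSummand (span Rᵐᵒᵖ {a}) := by
  let π : R →ₗ[Rᵐᵒᵖ] R := DistribSMul.toLinearMap Rᵐᵒᵖ R a
  have hπ : IsIdempotentElem π := LinearMap.ext fun x => by
    show a * (a * x) = a * x
    rw [← mul_assoc, ha.eq]
  have hrange : span Rᵐᵒᵖ {a} = LinearMap.range π := by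
    ext x; exact mem_span_singleton_op
  exact ⟨_, hrange ▸ LinearMap.IsIdempotentElem.isCompl hπ⟩

namespace corner

variable {e : R}

theorem mul_mul_self_mem (r : R) : e * r * e ∈ corner e := ⟨r, rfl⟩

theorem coe_mul_idem (he : IsIdempotentElem e) (x : corner e) : (x : R) * e = x := by
  obtain ⟨r, hr⟩ := x.2
  rw [hr, mul_assoc, he.eq]

variable [Fact (IsIdempotentElem e)]

-- Agrees with the `cornerRing he` of the statement up to proof irrelevance.
instance : Ring (corner e) := cornerRing Fact.out

theorem coe_op_smul (c : (corner e)ᵐᵒᵖ) (x : corner e) :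
    ((c • x : corner e) : R) = x * (c.unop : R) := rfl

def comap (N : Submodule Rᵐᵒᵖ R) : Submodule (corner e)ᵐᵒᵖ (corner e) where
  carrier := {x | (x : R) ∈ N}
  add_mem' := N.add_mem
  zero_mem' := N.zero_mem
  smul_mem' c _ hx := N.smul_mem (op (c.unop : R)) hx

def extend (p : Submodule (corner e)ᵐᵒᵖ (corner e)) : Submodule Rᵐᵒᵖ R :=
  span Rᵐᵒᵖ (Subtype.val '' (p : Set (corner e)))

theorem gc_extend_comap : GaloisConnection (extend (e := e)) comap := fun _ _ =>
  span_le.trans Set.image_subset_iff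

theorem extend_span_singleton (x : corner e) :
    extend (span (corner e)ᵐᵒᵖ {x}) = span Rᵐᵒᵖ {(x : R)} := by
  refine le_antisymm (gc_extend_comap.l_le ?_) (span_le.2 ?_)
  · exact span_le.2 (Set.singleton_subset_iff.2 (mem_span_singleton_self (x : R)))
  · exact Set.singleton_subset_iff.2 (subset_span ⟨x, mem_span_singleton_self x, rfl⟩)

theorem exists_mem_coe_eq_mul_mul {p : Submodule (corner e)ᵐᵒᵖ (corner e)} {a : R}
    (ha : a ∈ extend p) (r : R) : ∃ y ∈ p, (y : R) = a * r * e := by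
  induction ha using span_induction generalizing r with
  | mem _ hx =>
    obtain ⟨y, hy, rfl⟩ := hx
    refine ⟨op ⟨e * r * e, mul_mul_self_mem r⟩ • y, p.smul_mem _ hy, ?_⟩
    rw [coe_op_smul]
    show (y : R) * (e * r * e) = y * r * e
    rw [← mul_assoc, ← mul_assoc, coe_mul_idem Fact.out y]
  | zero => exact ⟨0, p.zero_mem, by simp⟩
  | add _ _ _ _ hx hy =>
    obtain ⟨u, hu, hu'⟩ := hx r
    obtain ⟨v, hv, hv'⟩ := hy r
    refine ⟨u + v, p.add_mem hu hv, ?_⟩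
    show (u : R) + v = _
    rw [hu', hv', add_mul, add_mul]
  | smul c _ _ hx =>
    obtain ⟨y, hy, hy'⟩ := hx (c.unop * r)
    exact ⟨y, hy, by rw [hy', smul_eq_mul_unop, mul_assoc _ c.unop]⟩

theorem isSummand_of_isSummand_extend {p : Submodule (corner e)ᵐᵒᵖ (corner e)}
    (h : IsSummand (extend p)) : IsSummand p := by
  obtain ⟨Q, hQ⟩ := h
  refine ⟨comap Q, disjoint_def.2 fun x hxp hxQ => ?_, codisjoint_iff.2 (eq_top_iff.2 ?_)⟩
  · exact Subtype.ext (disjoint_def.1 hQ.disjoint _ (subset_span ⟨x, hxp, rfl⟩) hxQ)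
  rintro x -
  obtain ⟨a, ha, q, hq, hx⟩ := mem_sup.1 (hQ.sup_eq_top ▸ mem_top : (x : R) ∈ extend p ⊔ Q)
  obtain ⟨y, hy, hy'⟩ := exists_mem_coe_eq_mul_mul ha 1
  refine mem_sup.2 ⟨y, hy, x - y, ?_, add_sub_cancel y x⟩
  have hxy : ((x - y : corner e) : R) = q * e := by
    rw [AddSubgroupClass.coe_sub, hy', mul_one, ← coe_mul_idem Fact.out x, ← hx, add_mul,
      add_sub_cancel_left]
  exact (hxy ▸ Q.smul_mem (op e) hq : ((x - y : corner e) : R) ∈ Q)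

end corner

end

/-- If `R` is (right) SSP, then so is the corner ring `S = eRe`: for any two
idempotents `f, g` of `S`, `fS + gS` is a direct summand of `S` as a right `S`-module. -/
theorem stmt11 {R : Type*} [Ring R] {e : R} (he : IsIdempotentElem e)
    (hSSP : ∀ p q : Submodule Rᵐᵒᵖ R, IsSummand p → IsSummand q → IsSummand (p ⊔ q)) :
    letI : Ring (corner e) := cornerRing he
    ∀ f g : corner e, IsIdempotentElem f → IsIdempotentElem g →
      IsSummand (Submodule.span (corner e)ᵐᵒᵖ {f} ⊔ Submodule.span (corner e)ᵐᵒᵖ {g}) := by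
  have : Fact (IsIdempotentElem e) := ⟨he⟩
  intro f g hf hg
  apply corner.isSummand_of_isSummand_extend
  rw [(corner.gc_extend_comap (e := e)).l_sup, corner.extend_span_singleton,
    corner.extend_span_singleton]
  exact hSSP _ _ (IsIdempotentElem.isSummand_span_op (congrArg Subtype.val hf))
    (IsIdempotentElem.isSummand_span_op (congrArg Subtype.val hg))
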